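/- The assumption b > ω₁ holds if and only if S_ω × S_{ω₁} is a k_R-space, if and only if S_ω × S_{ω₁} is a k-space. -/

import Mathlib

open Set Filter Topology Cardinal

/-- A `k`-space: a set is closed whenever its trace on every compact subset is closed. -/
def IsKSpace (X : Type*) [TopologicalSpace X] : Prop :=
  ∀ C : Set X, (∀ K : Set X, IsCompact K → IsClosed (Subtype.val ⁻¹' C : Set K)) → IsClosed C

/-- A `k_R`-space: every real-valued function which is continuous on each
compact subset is continuous. -/
def IsKRSpace (X : Type*) [TopologicalSpace X] : Prop :=
  ∀ f : X → ℝ, (∀ K : Set X, IsCompact K → ContinuousOn f K) → Continuous f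
/-- The sequential fan with spokes indexed by `κ`: underlying set is
`Option (κ × ℕ)`, with `none` the apex and `some (α, n)` the `n`-th point
of the `α`-th spoke. -/
def Fan (κ : Type*) : Type _ := Option (κ × ℕ)

/-- The quotient topology on the fan: each point `some (α, n)` is isolated and
a set containing the apex is open iff it contains a tail of every spoke. -/
instance Fan.instTopologicalSpace (κ : Type*) : TopologicalSpace (Fan κ) where
  IsOpen s := (none : Option (κ × ℕ)) ∈ s → ∀ α : κ, {n : ℕ | (some (α, n) : Option (κ × ℕ)) ∉ s}.Finite
  isOpen_univ := by intro _ α; exact Set.finite_empty.subset (fun n hn => (hn (Set.mem_univ _)).elim)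
  isOpen_inter := by
    intro s t hs ht hmem α
    refine ((hs hmem.1 α).union (ht hmem.2 α)).subset ?_
    intro n hn
    by_contra h
    simp only [Set.mem_union, Set.mem_setOf_eq] at h
    push_neg at h
    exact hn ⟨h.1, h.2⟩
  isOpen_sUnion := by
    intro S hS hmem α
    obtain ⟨s, hsS, hs⟩ := hmem
    refine (hS s hsS hs α).subset ?_
    intro n hn hns
    exact hn (Set.mem_sUnion.2 ⟨s, hsS, hns⟩)

/-- The apex of the sequential fan. -/
def Fan.apex {κ : Type*} : Fan κ := (none : Option (κ × ℕ))

/-- The `n`-th point of the `α`-th spoke of the sequential fan. -/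
def Fan.pt {κ : Type*} (α : κ) (n : ℕ) : Fan κ := (some (α, n) : Option (κ × ℕ))
/-- The bounding number `𝔟`: the least cardinality of a family in `ℕ → ℕ` which is
unbounded with respect to eventual domination. -/
noncomputable def boundingNumber : Cardinal :=
  sInf {c : Cardinal | ∃ F : Set (ℕ → ℕ), #↥F = c ∧
    ¬ ∃ g : ℕ → ℕ, ∀ f ∈ F, ∀ᶠ n in Filter.atTop, f n ≤ g n}

/-!
Compact subsets of a fan meet only finitely many spokes. If `𝔟 ≤ ω₁`, an unbounded family
`(f_α)_{α < ω₁}` gives the set `D` of points `(pt n (f_α n), pt α n)`: it meets each compact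
set in a finite set, so its indicator is continuous on compacta, but `D` accumulates at the
double apex, so the product is not `k_R`. If `𝔟 > ω₁` and `C` has closed traces on compacta and
misses the double apex, the tube lemma on products of two spokes (each a convergent sequence
with its limit) yields thresholds `A n α`, `B n α` beyond which `C` is avoided; a single `g`
eventually dominates all `A · α`, and the finitely many exceptional spokes below that point are
absorbed by `B`, which produces a basic neighbourhood of the double apex missing `C`.
-/
section KClosed

variable {X Y : Type*} [TopologicalSpace X] [TopologicalSpace Y]

def IsKClosed (C : Set X) : Prop :=
  ∀ K : Set X, IsCompact K → IsClosed (C ∩ K)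

theorem isKSpace_of_forall_isKClosed [T2Space X] (h : ∀ C : Set X, IsKClosed C → IsClosed C) :
    IsKSpace X := by
  intro C hC
  refine h C fun K hK => ?_
  rw [inter_comm, ← Subtype.image_preimage_coe]
  exact hK.isClosed.isClosedMap_subtype_val _ (hC K hK)

theorem IsKClosed.preimage {C : Set X} (hC : IsKClosed C) {f : Y → X} (hf : Continuous f)
    (hinj : Function.Injective f) : IsKClosed (f ⁻¹' C) := fun K hK => by
  rw [← hinj.preimage_image K, ← preimage_inter]
  exact (hC _ (hK.image hf)).preimage hf

theorem IsKClosed.eventually_forall_notMem_left {C : Set (X × Y)} (hC : IsKClosed C)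
    {s : Set Y} (hs : IsCompact s) {x : ℕ → X} {x₀ : X} (hx : Tendsto x atTop (𝓝 x₀))
    (h : ∀ y ∈ s, (x₀, y) ∉ C) : ∀ᶠ k in atTop, ∀ y ∈ s, (x k, y) ∉ C := by
  have hK : IsCompact (insert x₀ (range x) ×ˢ s) := hx.isCompact_insert_range.prod hs
  have hnhds : ∀ᶠ x' in 𝓝 x₀, ∀ y ∈ s, (x', y) ∉ C ∩ insert x₀ (range x) ×ˢ s :=
    hs.eventually_forall_of_forall_eventually fun y hy =>
      (hC _ hK).isOpen_compl.mem_nhds fun hC' => h y hy hC'.1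
  filter_upwards [hx.eventually hnhds] with k hk y hy hyC
  exact hk y hy ⟨hyC, mk_mem_prod (mem_insert_of_mem _ (mem_range_self k)) hy⟩

theorem IsKClosed.eventually_forall_notMem_right {C : Set (X × Y)} (hC : IsKClosed C)
    {s : Set X} (hs : IsCompact s) {y : ℕ → Y} {y₀ : Y} (hy : Tendsto y atTop (𝓝 y₀))
    (h : ∀ x ∈ s, (x, y₀) ∉ C) : ∀ᶠ m in atTop, ∀ x ∈ s, (x, y m) ∉ C :=
  (hC.preimage continuous_swap Prod.swap_injective).eventually_forall_notMem_left hs hy h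

theorem IsKRSpace.isClosed_of_finite_inter_isCompact [T1Space X] (hX : IsKRSpace X) {D : Set X}
    (hD : ∀ x ∈ D, IsOpen {x}) (hDK : ∀ K : Set X, IsCompact K → (D ∩ K).Finite) :
    IsClosed D := by
  have hφ : Continuous (D.indicator fun _ => (1 : ℝ)) := by
    refine hX _ fun K hK => ?_
    have hclopen : IsClopen (D ∩ K) :=
      ⟨(hDK K hK).isClosed, isOpen_iff_mem_nhds.2 fun x hx =>
        mem_of_superset ((hD x hx.1).mem_nhds rfl) (singleton_subset_iff.2 hx)⟩
    have hcont := hclopen.continuous_indicator (f := fun _ => (1 : ℝ)) continuous_const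
    refine hcont.continuousOn.congr fun x hx => ?_
    by_cases hxD : x ∈ D <;> simp [hxD, hx]
  convert (isClosed_singleton (x := (1 : ℝ))).preimage hφ using 1
  ext x
  by_cases hxD : x ∈ D <;> simp [hxD]

theorem IsKSpace.isKRSpace (hX : IsKSpace X) : IsKRSpace X := by
  intro f hf
  refine continuous_iff_isClosed.2 fun s hs => hX _ fun K hK => ?_
  exact hs.preimage (hf K hK).domRestrict

end KClosed

namespace Fan

variable {κ : Type*}

theorem apex_or_pt (x : Fan κ) : x = apex ∨ ∃ α n, x = pt α n :=
  match x with
  | none => .inl rfl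
  | some (α, n) => .inr ⟨α, n, rfl⟩

theorem pt_ne_apex (α : κ) (n : ℕ) : pt α n ≠ apex :=
  Option.some_ne_none _

theorem pt_inj {α β : κ} {n m : ℕ} : pt α n = pt β m ↔ α = β ∧ n = m :=
  Option.some_inj.trans Prod.ext_iff

theorem isOpen_iff {s : Set (Fan κ)} :
    IsOpen s ↔ (apex ∈ s → ∀ α, {n | pt α n ∉ s}.Finite) :=
  Iff.rfl

theorem isOpen_of_apex_notMem {s : Set (Fan κ)} (h : apex ∉ s) : IsOpen s :=
  isOpen_iff.2 fun h' => absurd h' h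

theorem isOpen_singleton_pt (α : κ) (n : ℕ) : IsOpen {pt α n} :=
  isOpen_of_apex_notMem (pt_ne_apex α n).symm

instance : T1Space (Fan κ) where
  t1 x := by
    rcases x.apex_or_pt with rfl | ⟨α, n, rfl⟩
    · exact isOpen_compl_iff.1 (isOpen_of_apex_notMem fun h => h rfl)
    · refine isOpen_compl_iff.1 (isOpen_iff.2 fun _ β => (finite_singleton n).subset ?_)
      intro m hm
      simp only [mem_ofPred_eq, mem_compl_iff, mem_singleton_iff, not_not, pt_inj] at hm
      exact hm.2

instance : T2Space (Fan κ) := by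
  refine ⟨fun x y hxy => ?_⟩
  rcases x.apex_or_pt with rfl | ⟨α, n, rfl⟩
  · obtain ⟨β, m, rfl⟩ := y.apex_or_pt.resolve_left hxy.symm
    exact ⟨{pt β m}ᶜ, {pt β m}, isOpen_compl_singleton, isOpen_singleton_pt β m, hxy, rfl,
      disjoint_compl_left⟩
  · exact ⟨{pt α n}, {pt α n}ᶜ, isOpen_singleton_pt α n, isOpen_compl_singleton, rfl, hxy.symm,
      disjoint_compl_right⟩

theorem eventually_nhds_apex_iff {P : Fan κ → Prop} :
    (∀ᶠ x in 𝓝 apex, P x) ↔ P apex ∧ ∀ α, ∀ᶠ n in atTop, P (pt α n) := by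
  simp only [← Nat.cofinite_eq_atTop, eventually_cofinite]
  refine ⟨fun h => ?_, fun ⟨hapex, hpt⟩ => (isOpen_iff.2 fun _ => hpt).mem_nhds hapex⟩
  obtain ⟨o, hoP, ho, hapex⟩ := mem_nhds_iff.1 h
  exact ⟨hoP hapex, fun α => (isOpen_iff.1 ho hapex α).subset fun n hn hno => hn (hoP hno)⟩

theorem tendsto_pt_apex (α : κ) : Tendsto (pt α) atTop (𝓝 apex) :=
  fun _ hs => (eventually_nhds_apex_iff.1 hs).2 α

theorem finite_setOf_exists_pt_mem {K : Set (Fan κ)} (hK : IsCompact K) :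
    {α | ∃ n, pt α n ∈ K}.Finite := by
  choose! n hn using fun α (hα : α ∈ {α | ∃ n, pt α n ∈ K}) => hα
  set T := (fun α => pt α (n α)) '' {α | ∃ n, pt α n ∈ K}
  have hT : IsClosed T := by
    refine isOpen_compl_iff.1 (isOpen_iff.2 fun _ β => (finite_singleton (n β)).subset ?_)
    intro m hm
    obtain ⟨α, -, hα⟩ := not_not.1 hm
    exact ((pt_inj.1 hα).1 ▸ (pt_inj.1 hα).2).symm
  have hTfin : T.Finite := by
    refine (hK.of_isClosed_subset hT (image_subset_iff.2 hn)).finite ?_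
    refine isDiscrete_iff_forall_mem_exists_isOpen.2 fun x hx => ⟨{x}, ?_, inter_eq_left.2 ?_⟩
    · obtain ⟨α, -, rfl⟩ := hx
      exact isOpen_singleton_pt α (n α)
    · exact singleton_subset_iff.2 hx
  exact hTfin.of_finite_image fun α _ β _ h => (pt_inj.1 h).1

theorem eventually_nhds_apex_forall_le (g : κ → ℕ) :
    ∀ᶠ x in 𝓝 apex, ∀ α n, x = pt α n → g α ≤ n := by
  refine eventually_nhds_apex_iff.2 ⟨fun α n h => absurd h.symm (pt_ne_apex α n), fun α => ?_⟩
  filter_upwards [eventually_ge_atTop (g α)] with n hn β m h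
  obtain ⟨rfl, rfl⟩ := pt_inj.1 h
  exact hn

theorem isCompact_insert_apex_image_Ici (α : κ) (N : ℕ) :
    IsCompact (insert apex (pt α '' Ici N)) := by
  rw [← range_add_eq_image_Ici]
  exact ((tendsto_pt_apex α).comp (tendsto_add_atTop_nat N)).isCompact_insert_range

theorem isClosed_of_isKClosed {D : Set (Fan κ)} (hD : IsKClosed D) : IsClosed D := by
  refine isOpen_compl_iff.1 (isOpen_iff.2 fun hapex α => ?_)
  have hK := (tendsto_pt_apex α).isCompact_insert_range
  have hev : ∀ᶠ n in atTop, pt α n ∉ D :=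
    ((tendsto_pt_apex α).eventually ((hD _ hK).isOpen_compl.mem_nhds fun h => hapex h.1)).mono
      fun n hn hnD => hn ⟨hnD, mem_insert_of_mem _ (mem_range_self n)⟩
  rw [← Nat.cofinite_eq_atTop, eventually_cofinite] at hev
  simpa using hev

end Fan

open Fan

section FanProduct

variable {X κ κ₁ κ₂ : Type*} [TopologicalSpace X]

theorem IsKClosed.compl_mem_nhds_of_isOpen_singleton_left {C : Set (X × Fan κ)}
    (hC : IsKClosed C) {x : X} (hx : IsOpen {x}) {y : Fan κ} (h : (x, y) ∉ C) :
    Cᶜ ∈ 𝓝 (x, y) := by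
  have hD : IsClosed (Prod.mk x ⁻¹' C) :=
    isClosed_of_isKClosed (hC.preimage (.prodMk_right x) (Prod.mk_right_injective x))
  rw [nhds_prod_eq, (isOpen_singleton_iff_nhds_eq_pure x).1 hx, pure_prod]
  exact hD.isOpen_compl.mem_nhds h

theorem IsKClosed.compl_mem_nhds_of_isOpen_singleton_right {C : Set (Fan κ × X)}
    (hC : IsKClosed C) {x : Fan κ} {y : X} (hy : IsOpen {y}) (h : (x, y) ∉ C) :
    Cᶜ ∈ 𝓝 (x, y) := by
  have hD : IsClosed ((·, y) ⁻¹' C) :=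
    isClosed_of_isKClosed (hC.preimage (.prodMk_left y) (Prod.mk_left_injective y))
  rw [nhds_prod_eq, (isOpen_singleton_iff_nhds_eq_pure y).1 hy, prod_pure]
  exact hD.isOpen_compl.mem_nhds h

theorem IsKClosed.exists_thresholds {C : Set (Fan κ₁ × Fan κ₂)} (hC : IsKClosed C)
    (h₀ : (apex, apex) ∉ C) :
    ∃ (a : κ₁ → ℕ) (b : κ₂ → ℕ) (A B : κ₁ → κ₂ → ℕ),
      (∀ n k, a n ≤ k → (pt n k, apex) ∉ C) ∧ (∀ α m, b α ≤ m → (apex, pt α m) ∉ C) ∧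
      ∀ n α k m, (a n ≤ k ∧ B n α ≤ m ∨ A n α ≤ k ∧ b α ≤ m) → (pt n k, pt α m) ∉ C := by
  have ha (n : κ₁) : ∀ᶠ k in atTop, ∀ y ∈ ({apex} : Set (Fan κ₂)), (pt n k, y) ∉ C :=
    hC.eventually_forall_notMem_left isCompact_singleton (tendsto_pt_apex n) (by simpa)
  have hb (α : κ₂) : ∀ᶠ m in atTop, ∀ x ∈ ({apex} : Set (Fan κ₁)), (x, pt α m) ∉ C :=
    hC.eventually_forall_notMem_right isCompact_singleton (tendsto_pt_apex α) (by simpa)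
  choose a ha using fun n => eventually_atTop.1 (ha n)
  choose b hb using fun α => eventually_atTop.1 (hb α)
  have hB (n : κ₁) (α : κ₂) :
      ∀ᶠ m in atTop, ∀ x ∈ insert apex (pt n '' Ici (a n)), (x, pt α m) ∉ C := by
    refine hC.eventually_forall_notMem_right (isCompact_insert_apex_image_Ici n (a n))
      (tendsto_pt_apex α) ?_
    simp only [forall_mem_insert, forall_mem_image]
    exact ⟨h₀, fun k hk => ha n k hk apex rfl⟩
  have hA (n : κ₁) (α : κ₂) :
      ∀ᶠ k in atTop, ∀ y ∈ insert apex (pt α '' Ici (b α)), (pt n k, y) ∉ C := by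
    refine hC.eventually_forall_notMem_left (isCompact_insert_apex_image_Ici α (b α))
      (tendsto_pt_apex n) ?_
    simp only [forall_mem_insert, forall_mem_image]
    exact ⟨h₀, fun m hm => hb α m hm apex rfl⟩
  choose B hB using fun n α => eventually_atTop.1 (hB n α)
  choose A hA using fun n α => eventually_atTop.1 (hA n α)
  refine ⟨a, b, A, B, fun n k hk => ha n k hk apex rfl, fun α m hm => hb α m hm apex rfl, ?_⟩
  rintro n α k m (⟨hk, hm⟩ | ⟨hk, hm⟩)
  · exact hB n α m hm _ (mem_insert_of_mem _ (mem_image_of_mem _ hk))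
  · exact hA n α k hk _ (mem_insert_of_mem _ (mem_image_of_mem _ hm))

theorem IsKClosed.compl_mem_nhds_apex {ι : Type*}
    (hbdd : ∀ f : ι → ℕ → ℕ, ∃ g : ℕ → ℕ, ∀ α, f α ≤ᶠ[atTop] g) {C : Set (Fan ℕ × Fan ι)}
    (hC : IsKClosed C) (h₀ : (apex, apex) ∉ C) : Cᶜ ∈ 𝓝 (apex, apex) := by
  obtain ⟨a, b, A, B, ha, hb, hab⟩ := hC.exists_thresholds h₀
  obtain ⟨g, hg⟩ := hbdd fun α n => A n α
  choose N hN using fun α => eventually_atTop.1 (hg α)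
  -- `g` dominates `A · α` only from `N α` on; for the finitely many `n < N α`, the threshold on
  -- spoke `α` is raised above `B n α` instead.
  rw [nhds_prod_eq]
  filter_upwards [Eventually.prod_mk (eventually_nhds_apex_forall_le fun n => max (a n) (g n))
    (eventually_nhds_apex_forall_le fun α => max (b α) ((Finset.range (N α)).sup (B · α)))]
  rintro ⟨x, y⟩ ⟨hx, hy⟩
  rcases x.apex_or_pt with rfl | ⟨n, k, rfl⟩ <;> rcases y.apex_or_pt with rfl | ⟨α, m, rfl⟩
  · exact h₀
  · exact hb α m ((le_max_left _ _).trans (hy α m rfl))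
  · exact ha n k ((le_max_left _ _).trans (hx n k rfl))
  · have hk := hx n k rfl
    have hm := hy α m rfl
    refine hab n α k m ?_
    rcases lt_or_ge n (N α) with hn | hn
    · refine .inl ⟨(le_max_left _ _).trans hk, ?_⟩
      exact (Finset.le_sup (f := (B · α)) (Finset.mem_range.2 hn)).trans
        ((le_max_right _ _).trans hm)
    · exact .inr ⟨(hN α n hn).trans ((le_max_right _ _).trans hk), (le_max_left _ _).trans hm⟩

theorem isKSpace_fan_prod_of_forall_bounded {ι : Type*}
    (hbdd : ∀ f : ι → ℕ → ℕ, ∃ g : ℕ → ℕ, ∀ α, f α ≤ᶠ[atTop] g) :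
    IsKSpace (Fan ℕ × Fan ι) := by
  refine isKSpace_of_forall_isKClosed fun C hC => isOpen_compl_iff.1 (isOpen_iff_mem_nhds.2 ?_)
  rintro ⟨x, y⟩ h
  rcases x.apex_or_pt with rfl | ⟨n, k, rfl⟩
  · rcases y.apex_or_pt with rfl | ⟨α, m, rfl⟩
    · exact hC.compl_mem_nhds_apex hbdd h
    · exact hC.compl_mem_nhds_of_isOpen_singleton_right (isOpen_singleton_pt α m) h
  · exact hC.compl_mem_nhds_of_isOpen_singleton_left (isOpen_singleton_pt n k) h

theorem not_isKRSpace_fan_prod_of_unbounded {ι : Type*} {f : ι → ℕ → ℕ}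
    (hf : ∀ g : ℕ → ℕ, ∃ α, ¬ f α ≤ᶠ[atTop] g) : ¬ IsKRSpace (Fan ℕ × Fan ι) := by
  intro hX
  set d : ι × ℕ → Fan ℕ × Fan ι := fun p => (pt p.2 (f p.1 p.2), pt p.1 p.2)
  set D := range d
  have hD : ∀ z ∈ D, IsOpen {z} := by
    rintro _ ⟨⟨α, n⟩, rfl⟩
    rw [← singleton_prod_singleton]
    exact (isOpen_singleton_pt _ _).prod (isOpen_singleton_pt _ _)
  have hDK (K : Set (Fan ℕ × Fan ι)) (hK : IsCompact K) : (D ∩ K).Finite := by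
    refine (((finite_setOf_exists_pt_mem (hK.image continuous_snd)).prod
      (finite_setOf_exists_pt_mem (hK.image continuous_fst))).image d).subset ?_
    rintro _ ⟨⟨⟨α, n⟩, rfl⟩, hαn⟩
    exact ⟨(α, n), ⟨⟨n, _, hαn, rfl⟩, ⟨f α n, _, hαn, rfl⟩⟩, rfl⟩
  have happex : (apex, apex) ∉ D := fun ⟨_, h⟩ => pt_ne_apex _ _ (congrArg Prod.snd h)
  have hmem : (apex, apex) ∈ closure D := by
    rw [mem_closure_iff_frequently, nhds_prod_eq, Filter.Frequently, eventually_prod_iff]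
    rintro ⟨P, hP, Q, hQ, hPQ⟩
    choose G hG using fun n => eventually_atTop.1 ((eventually_nhds_apex_iff.1 hP).2 n)
    obtain ⟨α, hα⟩ := hf G
    obtain ⟨n, hn, hQn⟩ :=
      ((not_eventually.1 hα).and_eventually ((eventually_nhds_apex_iff.1 hQ).2 α)).exists
    exact hPQ (hG n _ (not_le.1 hn).le) hQn ⟨(α, n), rfl⟩
  exact happex ((hX.isClosed_of_finite_inter_isCompact hD hDK).closure_eq ▸ hmem)

end FanProduct

theorem forall_bounded_of_lt_boundingNumber {ι : Type} (hι : #ι < boundingNumber)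
    (f : ι → ℕ → ℕ) : ∃ g : ℕ → ℕ, ∀ α, f α ≤ᶠ[atTop] g := by
  by_contra hf
  have hb : boundingNumber ≤ #(range f) :=
    csInf_le' ⟨range f, rfl, fun ⟨g, hg⟩ => hf ⟨g, fun α => hg _ (mem_range_self α)⟩⟩
  exact (hb.trans mk_range_le).not_gt hι

theorem exists_unbounded_of_boundingNumber_le {ι : Type} (hι : boundingNumber ≤ #ι) :
    ∃ f : ι → ℕ → ℕ, ∀ g : ℕ → ℕ, ∃ α, ¬ f α ≤ᶠ[atTop] g := by
  obtain ⟨F, hFc, hF⟩ := csInf_mem (s := {c : Cardinal | ∃ F : Set (ℕ → ℕ), #↥F = c ∧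
      ¬ ∃ g : ℕ → ℕ, ∀ f ∈ F, ∀ᶠ n in atTop, f n ≤ g n})
    ⟨_, univ, rfl, fun ⟨g, hg⟩ => by simpa using (hg (g · + 1) trivial).exists⟩
  have hunb (g : ℕ → ℕ) : ∃ h ∈ F, ¬ h ≤ᶠ[atTop] g := by
    by_contra! H
    exact hF ⟨g, H⟩
  have : Nonempty F := let ⟨h, hh, _⟩ := hunb 0; ⟨⟨h, hh⟩⟩
  obtain ⟨e⟩ := (Cardinal.le_def _ _).1 (hFc ▸ hι : #F ≤ #ι)
  refine ⟨fun α => (Function.invFun e α : F), fun g => ?_⟩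
  obtain ⟨h, hhF, hh⟩ := hunb g
  obtain ⟨α, hα⟩ := Function.invFun_surjective e.injective ⟨h, hhF⟩
  exact ⟨α, by simpa only [hα] using hh⟩

/-- `𝔟 > ω₁` holds iff `S_ω × S_{ω₁}` is a `k_R`-space, iff `S_ω × S_{ω₁}` is a `k`-space. -/
theorem b_gt_aleph_one_iff_fan_prod_kR_iff_k (ι : Type) (hι : #ι = aleph 1) :
    (aleph 1 < boundingNumber ↔ IsKRSpace (Fan ℕ × Fan ι)) ∧
    (IsKRSpace (Fan ℕ × Fan ι) ↔ IsKSpace (Fan ℕ × Fan ι)) := by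
  have isK_of_lt (hb : aleph 1 < boundingNumber) : IsKSpace (Fan ℕ × Fan ι) :=
    isKSpace_fan_prod_of_forall_bounded (forall_bounded_of_lt_boundingNumber (hι ▸ hb))
  have lt_of_isKR (hkR : IsKRSpace (Fan ℕ × Fan ι)) : aleph 1 < boundingNumber := by
    by_contra hle
    obtain ⟨f, hf⟩ := exists_unbounded_of_boundingNumber_le (hι ▸ not_lt.1 hle)
    exact not_isKRSpace_fan_prod_of_unbounded hf hkR
  exact ⟨⟨fun h => (isK_of_lt h).isKRSpace, lt_of_isKR⟩,
    ⟨fun h => isK_of_lt (lt_of_isKR h), IsKSpace.isKRSpace⟩⟩
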